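/- For m, A > 0, x₀ ∈ ℝ, q > 0, the pair α(x) = arctan(e^{2m(x-x₀)}), κ(x) = √(qσ(x-x₀)/(1+qσ(x-x₀))) with σ(x) = e^{(2m/A)x}/(1+e^{4mx})^{1/A} has kink energy exactly E(κ,α) = 4mr, where E(κ,α) = ∫_{-∞}^{∞} r{4A(κ')² + 2(1-κ²)²(α')² + 2m²(1-κ²)²sin²(2α) + 4m²κ²(1-κ²)²cos²(2α)/A} dx and r > 0. -/

import Mathlib

/-!
Bogomolny's trick: completing squares writes the energy density as
`4A (κ' - (m/A) κ (1-κ²) cos 2α)² + 2 (1-κ²)² (α' - m sin 2α)² + d/dx [-2m (1-κ²)² cos 2α]`.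
The explicit pair solves the first-order (BPS) equations `α' = m sin 2α`, `A κ' = m κ (1-κ²) cos 2α`:
the first because `sin (2 arctan u) = 2u/(1+u²)`, the second because `σ = (sin 2α / 2)^(1/A)`.
So the density is the derivative of `-2m (1-κ²)² cos 2α`; being nonnegative it is integrable,
and the integral is the jump `2m - (-2m)` between `κ = α = 0` at `-∞` and `κ = 0, α = π/2` at `+∞`.
-/

open Real MeasureTheory Filter Topology

theorem integral_of_hasDerivAt_of_nonneg_of_tendsto {f f' : ℝ → ℝ} {a b : ℝ}
    (hderiv : ∀ x, HasDerivAt f (f' x) x) (hf' : ∀ x, 0 ≤ f' x)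
    (hbot : Tendsto f atBot (𝓝 a)) (htop : Tendsto f atTop (𝓝 b)) :
    ∫ x, f' x = b - a := by
  have hcont : Continuous f := continuous_iff_continuousAt.2 fun x => (hderiv x).continuousAt
  have hint : ∀ s t, IntervalIntegrable f' volume s t := fun s t =>
    intervalIntegral.intervalIntegrable_deriv_of_nonneg hcont.continuousOn
      (fun x _ => hderiv x) (fun x _ => hf' x)
  have hnorm : (fun i : ℝ => ∫ x in -i..i, ‖f' x‖) = fun i => f i - f (-i) := by
    ext i
    simp only [Real.norm_of_nonneg (hf' _)]
    exact intervalIntegral.integral_eq_sub_of_hasDerivAt (fun x _ => hderiv x) (hint _ _)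
  have hf'int : Integrable f' :=
    integrable_of_intervalIntegral_norm_tendsto (b - a) (fun i => (hint (-i) i).1)
      tendsto_neg_atTop_atBot tendsto_id
      (hnorm ▸ htop.sub (hbot.comp tendsto_neg_atTop_atBot))
  exact integral_of_hasDerivAt_of_tendsto hderiv hf'int hbot htop

noncomputable def kinkEnergyDensity (m A k k' a a' : ℝ) : ℝ :=
  4 * A * k' ^ 2 + 2 * (1 - k ^ 2) ^ 2 * a' ^ 2 + 2 * m ^ 2 * (1 - k ^ 2) ^ 2 * sin (2 * a) ^ 2
    + 4 * m ^ 2 * k ^ 2 * (1 - k ^ 2) ^ 2 * cos (2 * a) ^ 2 / A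

noncomputable def bogomolnyPotential (m k a : ℝ) : ℝ := -2 * m * ((1 - k ^ 2) ^ 2 * cos (2 * a))

noncomputable def kinkEnergy (m A : ℝ) (κ α : ℝ → ℝ) : ℝ :=
  ∫ x, kinkEnergyDensity m A (κ x) (deriv κ x) (α x) (deriv α x)

section Bogomolny

variable {m A : ℝ}

theorem kinkEnergyDensity_nonneg (hA : 0 < A) (k k' a a' : ℝ) :
    0 ≤ kinkEnergyDensity m A k k' a a' := by
  unfold kinkEnergyDensity; positivity

theorem kinkEnergyDensity_eq_bogomolny (hA : A ≠ 0) (k k' a a' : ℝ) :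
    kinkEnergyDensity m A k k' a a' =
      4 * A * (k' - m / A * k * (1 - k ^ 2) * cos (2 * a)) ^ 2
        + 2 * (1 - k ^ 2) ^ 2 * (a' - m * sin (2 * a)) ^ 2
        + (8 * m * k * k' * (1 - k ^ 2) * cos (2 * a)
          + 4 * m * (1 - k ^ 2) ^ 2 * a' * sin (2 * a)) := by
  unfold kinkEnergyDensity
  field_simp
  ring

theorem hasDerivAt_bogomolnyPotential {κ α : ℝ → ℝ} {k' a' x : ℝ}
    (hκ : HasDerivAt κ k' x) (hα : HasDerivAt α a' x) :
    HasDerivAt (fun y => bogomolnyPotential m (κ y) (α y))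
      (8 * m * κ x * k' * (1 - κ x ^ 2) * cos (2 * α x)
        + 4 * m * (1 - κ x ^ 2) ^ 2 * a' * sin (2 * α x)) x := by
  refine (((((hκ.fun_pow 2).const_sub 1).fun_pow 2).fun_mul
    ((hα.const_mul 2).cos)).const_mul (-2 * m)).congr_deriv ?_
  push_cast
  ring

theorem tendsto_bogomolnyPotential {l : Filter ℝ} {κ α : ℝ → ℝ} {a : ℝ}
    (hκ : Tendsto κ l (𝓝 0)) (hα : Tendsto α l (𝓝 a)) :
    Tendsto (fun y => bogomolnyPotential m (κ y) (α y)) l (𝓝 (-2 * m * cos (2 * a))) := by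
  convert ((((hκ.pow 2).const_sub 1).pow 2).mul
    ((continuous_cos.tendsto _).comp (hα.const_mul 2))).const_mul (-2 * m) using 2 <;>
  simp [bogomolnyPotential]

theorem kinkEnergy_of_bps (hA : 0 < A) {κ α : ℝ → ℝ}
    (hκ : Differentiable ℝ κ) (hα : Differentiable ℝ α)
    (hκ_bps : ∀ x, deriv κ x = m / A * κ x * (1 - κ x ^ 2) * cos (2 * α x))
    (hα_bps : ∀ x, deriv α x = m * sin (2 * α x))
    (hκ_bot : Tendsto κ atBot (𝓝 0)) (hκ_top : Tendsto κ atTop (𝓝 0))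
    (hα_bot : Tendsto α atBot (𝓝 0)) (hα_top : Tendsto α atTop (𝓝 (π / 2))) :
    kinkEnergy m A κ α = 4 * m := by
  have hderiv : ∀ x, HasDerivAt (fun y => bogomolnyPotential m (κ y) (α y))
      (kinkEnergyDensity m A (κ x) (deriv κ x) (α x) (deriv α x)) x := fun x =>
    (hasDerivAt_bogomolnyPotential (hκ x).hasDerivAt (hα x).hasDerivAt).congr_deriv (by
      rw [kinkEnergyDensity_eq_bogomolny hA.ne', hκ_bps, hα_bps]
      ring)
  rw [kinkEnergy, integral_of_hasDerivAt_of_nonneg_of_tendsto hderiv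
    (fun x => kinkEnergyDensity_nonneg hA _ _ _ _) (tendsto_bogomolnyPotential hκ_bot hα_bot)
    (tendsto_bogomolnyPotential hκ_top hα_top), mul_div_cancel₀ π two_ne_zero, mul_zero,
    cos_pi, cos_zero]
  ring

end Bogomolny

theorem kinkEnergy_comp_sub_const (m A x₀ : ℝ) (κ α : ℝ → ℝ) :
    kinkEnergy m A (fun x => κ (x - x₀)) (fun x => α (x - x₀)) = kinkEnergy m A κ α := by
  simp only [kinkEnergy, deriv_comp_sub_const]
  exact integral_sub_right_eq_self
    (fun x => kinkEnergyDensity m A (κ x) (deriv κ x) (α x) (deriv α x)) x₀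

theorem sin_two_mul_arctan (x : ℝ) : sin (2 * arctan x) = 2 * x / (1 + x ^ 2) := by
  have h : √(1 + x ^ 2) ^ 2 = 1 + x ^ 2 := sq_sqrt (by positivity)
  rw [sin_two_mul, sin_arctan, cos_arctan]
  field_simp
  rw [h]

theorem hasDerivAt_sqrt_div_one_add {u : ℝ → ℝ} {u' x : ℝ} (hu : HasDerivAt u u' x)
    (hpos : 0 < u x) :
    HasDerivAt (fun y => √(u y / (1 + u y)))
      (√(u x / (1 + u x)) * (1 - √(u x / (1 + u x)) ^ 2) * (u' / (2 * u x))) x := by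
  have hg : 0 < u x / (1 + u x) := by positivity
  refine ((hu.fun_div (hu.const_add 1) (by positivity)).sqrt hg.ne').congr_deriv ?_
  have hs : √(u x / (1 + u x)) ^ 2 = u x / (1 + u x) := sq_sqrt hg.le
  field_simp
  rw [hs]
  field_simp

noncomputable def kinkAngle (m x : ℝ) : ℝ := arctan (exp (2 * m * x))

noncomputable def kinkProfile (m A x : ℝ) : ℝ :=
  exp ((2 * m / A) * x) / (1 + exp (4 * m * x)) ^ (1 / A)

noncomputable def kinkAmplitude (m A q x : ℝ) : ℝ :=
  √(q * kinkProfile m A x / (1 + q * kinkProfile m A x))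

section ExplicitKink

variable {m A : ℝ}

theorem hasDerivAt_kinkAngle (x : ℝ) :
    HasDerivAt (kinkAngle m) (m * sin (2 * kinkAngle m x)) x := by
  refine ((((hasDerivAt_id x).const_mul (2 * m)).exp).arctan).congr_deriv ?_
  rw [kinkAngle, sin_two_mul_arctan]
  simp only [id, mul_one]
  ring

theorem sin_two_mul_kinkAngle_pos (x : ℝ) : 0 < sin (2 * kinkAngle m x) := by
  rw [kinkAngle, sin_two_mul_arctan]
  positivity

theorem tendsto_kinkAngle_atBot (hm : 0 < m) : Tendsto (kinkAngle m) atBot (𝓝 0) := by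
  have := (continuous_arctan.tendsto 0).comp
    (tendsto_exp_atBot.comp (tendsto_id.const_mul_atBot (by positivity : 0 < 2 * m)))
  rwa [arctan_zero] at this

theorem tendsto_kinkAngle_atTop (hm : 0 < m) : Tendsto (kinkAngle m) atTop (𝓝 (π / 2)) :=
  (tendsto_nhds_of_tendsto_nhdsWithin tendsto_arctan_atTop).comp
    (tendsto_exp_atTop.comp (tendsto_id.const_mul_atTop (by positivity : 0 < 2 * m)))

theorem kinkProfile_eq_rpow (x : ℝ) :
    kinkProfile m A x = (sin (2 * kinkAngle m x) / 2) ^ (1 / A) := by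
  rw [kinkAngle, sin_two_mul_arctan, mul_div_assoc, mul_div_cancel_left₀ _ two_ne_zero,
    div_rpow (exp_pos _).le (by positivity), ← exp_mul, ← exp_nat_mul, kinkProfile]
  push_cast
  ring_nf

theorem hasDerivAt_kinkProfile (x : ℝ) :
    HasDerivAt (kinkProfile m A) (2 * m / A * kinkProfile m A x * cos (2 * kinkAngle m x)) x := by
  have hsin := sin_two_mul_kinkAngle_pos (m := m) x
  have hs : HasDerivAt (fun y => sin (2 * kinkAngle m y) / 2)
      (cos (2 * kinkAngle m x) * (2 * (m * sin (2 * kinkAngle m x))) / 2) x :=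
    (((hasDerivAt_kinkAngle x).const_mul 2).sin).div_const 2
  rw [funext (kinkProfile_eq_rpow (m := m) (A := A))]
  refine (hs.rpow_const (Or.inl (by positivity))).congr_deriv ?_
  rw [rpow_sub_one (by positivity)]
  field_simp

theorem tendsto_kinkProfile {l : Filter ℝ} {a : ℝ} (hA : 0 < A)
    (hα : Tendsto (kinkAngle m) l (𝓝 a)) (ha : sin (2 * a) = 0) :
    Tendsto (kinkProfile m A) l (𝓝 0) := by
  have hs := ((continuous_sin.tendsto _).comp (hα.const_mul 2)).div_const 2
  rw [ha, zero_div] at hs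
  have := ((continuousAt_rpow_const 0 (1 / A) (Or.inr (by positivity))).tendsto).comp hs
  rw [zero_rpow (by positivity)] at this
  exact this.congr fun x => (kinkProfile_eq_rpow x).symm

variable {q : ℝ}

theorem hasDerivAt_kinkAmplitude (hq : 0 < q) (x : ℝ) :
    HasDerivAt (kinkAmplitude m A q)
      (m / A * kinkAmplitude m A q x * (1 - kinkAmplitude m A q x ^ 2)
        * cos (2 * kinkAngle m x)) x := by
  have hu := (hasDerivAt_kinkProfile (m := m) (A := A) x).const_mul q
  have hσ : 0 < kinkProfile m A x := by rw [kinkProfile]; positivity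
  refine (hasDerivAt_sqrt_div_one_add hu (by positivity)).congr_deriv ?_
  simp only [kinkAmplitude]
  field_simp

theorem tendsto_kinkAmplitude {l : Filter ℝ} (hσ : Tendsto (kinkProfile m A) l (𝓝 0)) :
    Tendsto (kinkAmplitude m A q) l (𝓝 0) := by
  have hu := hσ.const_mul q
  have := (hu.div (hu.const_add 1) (by simp)).sqrt
  rwa [mul_zero, zero_div, sqrt_zero] at this

theorem kinkEnergy_kinkAmplitude_kinkAngle (hm : 0 < m) (hA : 0 < A) (hq : 0 < q) :
    kinkEnergy m A (kinkAmplitude m A q) (kinkAngle m) = 4 * m := by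
  have hσ_bot := tendsto_kinkProfile hA (tendsto_kinkAngle_atBot hm) (by simp)
  have hσ_top := tendsto_kinkProfile hA (tendsto_kinkAngle_atTop hm)
    (by rw [mul_div_cancel₀ π two_ne_zero, sin_pi])
  exact kinkEnergy_of_bps hA
    (fun x => (hasDerivAt_kinkAmplitude hq x).differentiableAt)
    (fun x => (hasDerivAt_kinkAngle x).differentiableAt)
    (fun x => (hasDerivAt_kinkAmplitude hq x).deriv) (fun x => (hasDerivAt_kinkAngle x).deriv)
    (tendsto_kinkAmplitude hσ_bot) (tendsto_kinkAmplitude hσ_top)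
    (tendsto_kinkAngle_atBot hm) (tendsto_kinkAngle_atTop hm)

end ExplicitKink

theorem explicit_kink_energy_eq_general
    (m A r q x₀ : ℝ) (hm : 0 < m) (hA : 0 < A) (hq : 0 < q)
    (σ : ℝ → ℝ)
    (hσ : ∀ x, σ x = Real.exp ((2 * m / A) * x) / (1 + Real.exp (4 * m * x)) ^ (1 / A))
    (α : ℝ → ℝ) (hα : ∀ x, α x = Real.arctan (Real.exp (2 * m * (x - x₀))))
    (κ : ℝ → ℝ)
    (hκ : ∀ x, κ x = Real.sqrt (q * σ (x - x₀) / (1 + q * σ (x - x₀)))) :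
    (∫ x, r * (4 * A * (deriv κ x) ^ 2 + 2 * (1 - κ x ^ 2) ^ 2 * (deriv α x) ^ 2
        + 2 * m ^ 2 * (1 - κ x ^ 2) ^ 2 * Real.sin (2 * α x) ^ 2
        + 4 * m ^ 2 * κ x ^ 2 * (1 - κ x ^ 2) ^ 2 * Real.cos (2 * α x) ^ 2 / A))
      = 4 * m * r := by
  obtain rfl : σ = kinkProfile m A := funext hσ
  obtain rfl : α = fun x => kinkAngle m (x - x₀) := funext hα
  obtain rfl : κ = fun x => kinkAmplitude m A q (x - x₀) := funext hκ
  calc _ = r * kinkEnergy m A (fun x => kinkAmplitude m A q (x - x₀))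
        (fun x => kinkAngle m (x - x₀)) := integral_const_mul r _
    _ = 4 * m * r := by
      rw [kinkEnergy_comp_sub_const, kinkEnergy_kinkAmplitude_kinkAngle hm hA hq, mul_comm]

theorem explicit_kink_energy_eq
    (m A r q x₀ : ℝ) (hm : 0 < m) (hA : 0 < A) (hr : 0 < r) (hq : 0 < q)
    (σ : ℝ → ℝ)
    (hσ : ∀ x, σ x = Real.exp ((2 * m / A) * x) / (1 + Real.exp (4 * m * x)) ^ (1 / A))
    (α : ℝ → ℝ) (hα : ∀ x, α x = Real.arctan (Real.exp (2 * m * (x - x₀))))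
    (κ : ℝ → ℝ)
    (hκ : ∀ x, κ x = Real.sqrt (q * σ (x - x₀) / (1 + q * σ (x - x₀)))) :
    (∫ x, r * (4 * A * (deriv κ x) ^ 2 + 2 * (1 - κ x ^ 2) ^ 2 * (deriv α x) ^ 2
        + 2 * m ^ 2 * (1 - κ x ^ 2) ^ 2 * Real.sin (2 * α x) ^ 2
        + 4 * m ^ 2 * κ x ^ 2 * (1 - κ x ^ 2) ^ 2 * Real.cos (2 * α x) ^ 2 / A))
      = 4 * m * r :=
  explicit_kink_energy_eq_general m A r q x₀ hm hA hq σ hσ α hα κ hκ
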